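/- arXiv:2205.06150 — 2 statements merged into one kernel-verified Lean document; each statement's English description precedes it below -/
import Mathlib

section
/- Top-like casting is term irrelevant: if A is top-like under the empty context and v₁ casts under A to v₁' and v₂ casts under A to v₂', then v₁' = v₂'. -/
/-! Syntax of F_i+ types -/
inductive Ty : Type
  | tvar : ℕ → Ty
  | tint : Ty
  | ttop : Ty
  | tbot : Ty
  | and : Ty → Ty → Ty
  | arrow : Ty → Ty → Ty
  | all : ℕ → Ty → Ty → Ty   -- ∀(X * A). B
  | rcd : ℕ → Ty → Ty
  deriving DecidableEq

/-- Type contexts: lists of (type variable, disjointness bound), most recent first. -/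
abbrev TCtx := List (ℕ × Ty)
/-- Term contexts. -/
abbrev Ctx := List (ℕ × Ty)

/-- Type well-formedness Δ ⊢ A. -/
inductive WfTy : TCtx → Ty → Prop
  | tvar {Δ X A} : (X, A) ∈ Δ → WfTy Δ (.tvar X)
  | tint {Δ} : WfTy Δ .tint
  | ttop {Δ} : WfTy Δ .ttop
  | tbot {Δ} : WfTy Δ .tbot
  | and {Δ A B} : WfTy Δ A → WfTy Δ B → WfTy Δ (.and A B)
  | arrow {Δ A B} : WfTy Δ A → WfTy Δ B → WfTy Δ (.arrow A B)
  | all {Δ X A B} : WfTy Δ A → WfTy ((X, A) :: Δ) B → WfTy Δ (.all X A B)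
  | rcd {Δ l A} : WfTy Δ A → WfTy Δ (.rcd l A)

/-- Type context well-formedness ⊢ Δ. -/
inductive TCW : TCtx → Prop
  | nil : TCW []
  | cons {Δ X A} : TCW Δ → WfTy Δ A → X ∉ Δ.map Prod.fst → TCW ((X, A) :: Δ)

/-- Term context well-formedness Δ ⊢ Γ. -/
def CW (Δ : TCtx) (Γ : Ctx) : Prop := ∀ p ∈ Γ, WfTy Δ p.2

/-- Type splitting  B ◁ A ▷ C, written `Spl A B C`. -/
inductive Spl : Ty → Ty → Ty → Prop
  | and {A B} : Spl (.and A B) A B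
  | arrow {A B B1 B2} : Spl B B1 B2 → Spl (.arrow A B) (.arrow A B1) (.arrow A B2)
  | rcd {l A A1 A2} : Spl A A1 A2 → Spl (.rcd l A) (.rcd l A1) (.rcd l A2)
  | all {X A B B1 B2} : Spl B B1 B2 → Spl (.all X A B) (.all X A B1) (.all X A B2)

/-- Ordinary types: no positive occurrence of intersection. -/
inductive Ordinary : Ty → Prop
  | tvar {X} : Ordinary (.tvar X)
  | tint : Ordinary .tint
  | ttop : Ordinary .ttop
  | tbot : Ordinary .tbot
  | arrow {A B} : Ordinary B → Ordinary (.arrow A B)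
  | all {X A B} : Ordinary B → Ordinary (.all X A B)
  | rcd {l A} : Ordinary A → Ordinary (.rcd l A)

/-- Bottom-like types ⌋A⌊. -/
inductive BL : Ty → Prop
  | bot : BL .tbot
  | andl {A B} : BL A → BL (.and A B)
  | andr {A B} : BL B → BL (.and A B)

/-- Algorithmic top-like types Δ ⊢ ⌉A⌈. -/
inductive TL : TCtx → Ty → Prop
  | top {Δ} : TL Δ .ttop
  | and {Δ A B} : TL Δ A → TL Δ B → TL Δ (.and A B)
  | arrow {Δ A B} : TL Δ B → TL Δ (.arrow A B)
  | rcd {Δ l A} : TL Δ A → TL Δ (.rcd l A)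
  | all {Δ X A B} : TL ((X, A) :: Δ) B → TL Δ (.all X A B)
  | tvar {Δ X A} : (X, A) ∈ Δ → BL A → TL Δ (.tvar X)

/-- Declarative BCD-style subtyping Δ ⊢ A <: B of F_i+. -/
inductive DSub : TCtx → Ty → Ty → Prop
  | refl {Δ A} : DSub Δ A A
  | trans {Δ A B C} : DSub Δ A B → DSub Δ B C → DSub Δ A C
  | top {Δ A} : DSub Δ A .ttop
  | bot {Δ A} : DSub Δ .tbot A
  | and {Δ A B C} : DSub Δ A B → DSub Δ A C → DSub Δ A (.and B C)
  | andl {Δ A B} : DSub Δ (.and A B) A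
  | andr {Δ A B} : DSub Δ (.and A B) B
  | arrow {Δ A1 A2 B1 B2} : DSub Δ B1 A1 → DSub Δ A2 B2 →
      DSub Δ (.arrow A1 A2) (.arrow B1 B2)
  | distArrow {Δ A B C} : DSub Δ (.and (.arrow A B) (.arrow A C)) (.arrow A (.and B C))
  | topArrow {Δ} : DSub Δ .ttop (.arrow .ttop .ttop)
  | rcd {Δ l A B} : DSub Δ A B → DSub Δ (.rcd l A) (.rcd l B)
  | distRcd {Δ l A B} : DSub Δ (.and (.rcd l A) (.rcd l B)) (.rcd l (.and A B))
  | topRcd {Δ l} : DSub Δ .ttop (.rcd l .ttop)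
  | all {Δ X A1 A2 B1 B2} : DSub Δ B1 A1 → DSub ((X, B1) :: Δ) A2 B2 →
      DSub Δ (.all X A1 A2) (.all X B1 B2)
  | topAll {Δ X A} : DSub Δ .ttop (.all X A .ttop)
  | distAll {Δ X A B C} : DSub Δ (.and (.all X A B) (.all X A C)) (.all X A (.and B C))
  | topVar {Δ X A} : (X, A) ∈ Δ → DSub Δ A .tbot → DSub Δ .ttop (.tvar X)

/-- Algorithmic subtyping Δ ⊢ A ≤ B with splittable types. -/
inductive ASub : TCtx → Ty → Ty → Prop
  | and {Δ A B B1 B2} : Spl B B1 B2 → ASub Δ A B1 → ASub Δ A B2 → ASub Δ A B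
  | int {Δ} : ASub Δ .tint .tint
  | var {Δ X} : ASub Δ (.tvar X) (.tvar X)
  | bot {Δ B} : Ordinary B → ASub Δ .tbot B
  | top {Δ A B} : Ordinary B → TL Δ B → ASub Δ A B
  | andl {Δ A1 A2 B} : Ordinary B → ASub Δ A1 B → ASub Δ (.and A1 A2) B
  | andr {Δ A1 A2 B} : Ordinary B → ASub Δ A2 B → ASub Δ (.and A1 A2) B
  | arrow {Δ A1 A2 B1 B2} : Ordinary (.arrow B1 B2) → ASub Δ B1 A1 → ASub Δ A2 B2 →
      ASub Δ (.arrow A1 A2) (.arrow B1 B2)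
  | rcd {Δ l A B} : Ordinary (.rcd l B) → ASub Δ A B → ASub Δ (.rcd l A) (.rcd l B)
  | all {Δ X A1 A2 B1 B2} : Ordinary (.all X B1 B2) → ASub Δ B1 A1 →
      ASub ((X, B1) :: Δ) A2 B2 → ASub Δ (.all X A1 A2) (.all X B1 B2)

/-- Disjointness axioms for structurally different type constructors. -/
inductive DAx : Ty → Ty → Prop
  | intArrow {A B} : DAx .tint (.arrow A B)
  | intRcd {l A} : DAx .tint (.rcd l A)
  | intAll {X A B} : DAx .tint (.all X A B)
  | arrowRcd {A B l C} : DAx (.arrow A B) (.rcd l C)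
  | arrowAll {A B X C D} : DAx (.arrow A B) (.all X C D)
  | rcdAll {l A X B C} : DAx (.rcd l A) (.all X B C)
  | rcdNeq {l1 l2 A B} : l1 ≠ l2 → DAx (.rcd l1 A) (.rcd l2 B)
  | symm {A B} : DAx A B → DAx B A

/-- Algorithmic disjointness Δ ⊢ A * B. -/
inductive Disj : TCtx → Ty → Ty → Prop
  | topl {Δ A B} : TL Δ A → Disj Δ A B
  | topr {Δ A B} : TL Δ B → Disj Δ A B
  | varl {Δ X A B} : (X, A) ∈ Δ → ASub Δ A B → Disj Δ (.tvar X) B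
  | varr {Δ X A B} : (X, A) ∈ Δ → ASub Δ A B → Disj Δ B (.tvar X)
  | spll {Δ A A1 A2 B} : Spl A A1 A2 → Disj Δ A1 B → Disj Δ A2 B → Disj Δ A B
  | splr {Δ A B B1 B2} : Spl B B1 B2 → Disj Δ A B1 → Disj Δ A B2 → Disj Δ A B
  | arrow {Δ A1 A2 B1 B2} : Disj Δ A2 B2 → Disj Δ (.arrow A1 A2) (.arrow B1 B2)
  | rcd {Δ l A B} : Disj Δ A B → Disj Δ (.rcd l A) (.rcd l B)
  | all {Δ X A1 A2 B1 B2} : Disj ((X, .and A1 B1) :: Δ) A2 B2 →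
      Disj Δ (.all X A1 A2) (.all X B1 B2)
  | ax {Δ A B} : DAx A B → Disj Δ A B

/-- Substitution of type C for type variable X in a type. -/
def substTT (X : ℕ) (C : Ty) : Ty → Ty
  | .tvar Y => if Y = X then C else .tvar Y
  | .tint => .tint
  | .ttop => .ttop
  | .tbot => .tbot
  | .and A B => .and (substTT X C A) (substTT X C B)
  | .arrow A B => .arrow (substTT X C A) (substTT X C B)
  | .all Y A B => .all Y (substTT X C A) (if Y = X then B else substTT X C B)
  | .rcd l A => .rcd l (substTT X C A)

/-- Pointwise substitution in a type context. -/
def substCtx (X : ℕ) (C : Ty) (Δ : TCtx) : TCtx :=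
  Δ.map fun p => (p.1, substTT X C p.2)

/-! Expressions -/
inductive Exp : Type
  | evar : ℕ → Exp
  | lit : ℤ → Exp
  | etop : Exp
  | anno : Exp → Ty → Exp
  | merge : Exp → Exp → Exp
  | efix : ℕ → Ty → Exp → Exp
  | app : Exp → Exp → Exp
  | tapp : Exp → Ty → Exp
  | proj : Exp → ℕ → Exp
  | lam : ℕ → Ty → Exp → Exp
  | tabs : ℕ → Exp → Exp
  | rcd : ℕ → Exp → Exp
  deriving DecidableEq

/-- Checkable terms p: lambdas, type abstractions, records. -/
inductive Chk : Exp → Prop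
  | lam {x A e} : Chk (.lam x A e)
  | tabs {X e} : Chk (.tabs X e)
  | rcd {l e} : Chk (.rcd l e)

/-- Values. -/
inductive Value : Exp → Prop
  | chk {p} : Chk p → Value p
  | anno {p A} : Chk p → Value (.anno p A)
  | lit {i} : Value (.lit i)
  | top : Value .etop
  | merge {v1 v2} : Value v1 → Value v2 → Value (.merge v1 v2)

/-- Pre-values u. -/
inductive PVal : Exp → Prop
  | lit {i} : PVal (.lit i)
  | top : PVal .etop
  | anno {e A} : PVal (.anno e A)
  | merge {u1 u2} : PVal u1 → PVal u2 → PVal (.merge u1 u2)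

/-- Principal types of pre-values. -/
inductive PTyp : Exp → Ty → Prop
  | lit {i} : PTyp (.lit i) .tint
  | top : PTyp .etop .ttop
  | anno {e A} : PTyp (.anno e A) A
  | merge {u1 u2 A B} : PTyp u1 A → PTyp u2 B → PTyp (.merge u1 u2) (.and A B)

/-- Top-like value generator ⟦A⟧. -/
def TLVal : Ty → Exp
  | .ttop => .etop
  | .arrow A B => .anno (.lam 0 .ttop .etop) (.arrow A B)
  | .rcd l A => .anno (.rcd l .etop) (.rcd l A)
  | .all X A B => .anno (.tabs X .etop) (.all X A B)
  | _ => .etop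

/-- Consistency of pre-values u₁ ≈ u₂. -/
inductive Cons : Exp → Exp → Prop
  | lit {i} : Cons (.lit i) (.lit i)
  | top : Cons .etop .etop
  | anno {e A B} : Cons (.anno e A) (.anno e B)
  | disjoint {u1 u2 A B} : PTyp u1 A → PTyp u2 B → Disj [] A B → Cons u1 u2
  | mergel {u1 u2 u} : Cons u1 u → Cons u2 u → Cons (.merge u1 u2) u
  | merger {u u1 u2} : Cons u u1 → Cons u u2 → Cons u (.merge u1 u2)

/-- Applicative distribution A ▷ B. -/
inductive AppDist : Ty → Ty → Prop
  | refl {A} : AppDist A A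
  | arrow {A B A1 B1 A2 B2} : AppDist A (.arrow A1 B1) → AppDist B (.arrow A2 B2) →
      AppDist (.and A B) (.arrow (.and A1 A2) (.and B1 B2))
  | all {A B X A1 B1 A2 B2} : AppDist A (.all X A1 B1) → AppDist B (.all X A2 B2) →
      AppDist (.and A B) (.all X (.and A1 A2) (.and B1 B2))
  | rcd {A B l B1 B2} : AppDist A (.rcd l B1) → AppDist B (.rcd l B2) →
      AppDist (.and A B) (.rcd l (.and B1 B2))

/-- Typing modes. -/
inductive Mode | inf | chk

/-- Bidirectional typing Δ; Γ ⊢ e ⇔ A. -/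
inductive Typing : TCtx → Ctx → Exp → Mode → Ty → Prop
  | top {Δ Γ} : TCW Δ → CW Δ Γ → Typing Δ Γ .etop .inf .ttop
  | lit {Δ Γ i} : TCW Δ → CW Δ Γ → Typing Δ Γ (.lit i) .inf .tint
  | var {Δ Γ x A} : TCW Δ → CW Δ Γ → (x, A) ∈ Γ → Typing Δ Γ (.evar x) .inf A
  | abs {Δ Γ x A e B1 B2} : WfTy Δ A → DSub Δ B1 A →
      Typing Δ ((x, A) :: Γ) e .chk B2 → Typing Δ Γ (.lam x A e) .chk (.arrow B1 B2)
  | tabs {Δ Γ X A e B} : WfTy Δ A → Typing ((X, A) :: Δ) Γ e .chk B →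
      Typing Δ Γ (.tabs X e) .chk (.all X A B)
  | rcd {Δ Γ l e A} : Typing Δ Γ e .chk A → Typing Δ Γ (.rcd l e) .chk (.rcd l A)
  | app {Δ Γ e1 e2 A B C} : Typing Δ Γ e1 .inf A → AppDist A (.arrow B C) →
      Typing Δ Γ e2 .chk B → Typing Δ Γ (.app e1 e2) .inf C
  | tapp {Δ Γ e A X B C A'} : Typing Δ Γ e .inf A → AppDist A (.all X B C) →
      WfTy Δ A' → Disj Δ A' B → Typing Δ Γ (.tapp e A') .inf (substTT X A' C)
  | proj {Δ Γ e A l B} : Typing Δ Γ e .inf A → AppDist A (.rcd l B) →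
      Typing Δ Γ (.proj e l) .inf B
  | merge {Δ Γ e1 e2 A B} : Typing Δ Γ e1 .inf A → Typing Δ Γ e2 .inf B →
      Disj Δ A B → Typing Δ Γ (.merge e1 e2) .inf (.and A B)
  | mergev {Δ Γ u1 u2 A B} : PVal u1 → PVal u2 → Cons u1 u2 →
      Typing Δ Γ u1 .inf A → Typing Δ Γ u2 .inf B →
      Typing Δ Γ (.merge u1 u2) .inf (.and A B)
  | inter {Δ Γ e A B} : Typing Δ Γ e .chk A → Typing Δ Γ e .chk B →
      Typing Δ Γ e .chk (.and A B)
  | fix {Δ Γ x A e} : WfTy Δ A → Typing Δ ((x, A) :: Γ) e .chk A →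
      Typing Δ Γ (.efix x A e) .inf A
  | anno {Δ Γ e A} : WfTy Δ A → Typing Δ Γ e .chk A → Typing Δ Γ (.anno e A) .inf A
  | sub {Δ Γ e A B} : Typing Δ Γ e .inf A → DSub Δ A B → Typing Δ Γ e .chk B

/-- Substitution of type C for type variable X in an expression. -/
def substTE (X : ℕ) (C : Ty) : Exp → Exp
  | .evar x => .evar x
  | .lit i => .lit i
  | .etop => .etop
  | .anno e A => .anno (substTE X C e) (substTT X C A)
  | .merge e1 e2 => .merge (substTE X C e1) (substTE X C e2)
  | .efix x A e => .efix x (substTT X C A) (substTE X C e)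
  | .app e1 e2 => .app (substTE X C e1) (substTE X C e2)
  | .tapp e A => .tapp (substTE X C e) (substTT X C A)
  | .proj e l => .proj (substTE X C e) l
  | .lam x A e => .lam x (substTT X C A) (substTE X C e)
  | .tabs Y e => .tabs Y (if Y = X then e else substTE X C e)
  | .rcd l e => .rcd l (substTE X C e)

/-- Substitution of expression e' for term variable x in an expression. -/
def substEE (x : ℕ) (e' : Exp) : Exp → Exp
  | .evar y => if y = x then e' else .evar y
  | .lit i => .lit i
  | .etop => .etop
  | .anno e A => .anno (substEE x e' e) A
  | .merge e1 e2 => .merge (substEE x e' e1) (substEE x e' e2)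
  | .efix y A e => .efix y A (if y = x then e else substEE x e' e)
  | .app e1 e2 => .app (substEE x e' e1) (substEE x e' e2)
  | .tapp e A => .tapp (substEE x e' e) A
  | .proj e l => .proj (substEE x e' e) l
  | .lam y A e => .lam y A (if y = x then e else substEE x e' e)
  | .tabs Y e => .tabs Y (substEE x e' e)
  | .rcd l e => .rcd l (substEE x e' e)

/-- Casting v ↪_A v'. -/
inductive Cast : Exp → Ty → Exp → Prop
  | int {i} : Cast (.lit i) .tint (.lit i)
  | top {v A} : Ordinary A → TL [] A → Cast v A (TLVal A)
  | anno {p B A} : Chk p → Ordinary A → ¬ TL [] A → DSub [] B A →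
      Cast (.anno p B) A (.anno p A)
  | mergel {v1 v2 A v} : Ordinary A → Cast v1 A v → Cast (.merge v1 v2) A v
  | merger {v1 v2 A v} : Ordinary A → Cast v2 A v → Cast (.merge v1 v2) A v
  | and {v A A1 A2 v1 v2} : Spl A A1 A2 → Cast v A1 v1 → Cast v A2 v2 →
      Cast v A (.merge v1 v2)

/-- Expression wrapping e ↝_A u. -/
inductive Wrap : Exp → Ty → Exp → Prop
  | and {e A A1 A2 u1 u2} : Spl A A1 A2 → Wrap e A1 u1 → Wrap e A2 u2 →
      Wrap e A (.merge u1 u2)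
  | anno {e A} : Ordinary A → ¬ TL [] A → Wrap e A (.anno e A)
  | top {e A} : Ordinary A → TL [] A → Wrap e A (TLVal A)

/-- Arguments: expressions, types, or record labels. -/
inductive Arg : Type
  | exp : Exp → Arg
  | ty : Ty → Arg
  | lbl : ℕ → Arg

/-- Parallel application v • arg ↪ u. -/
inductive PApp : Exp → Arg → Exp → Prop
  | abs {x A e B C e' u} : Wrap e' A u →
      PApp (.anno (.lam x A e) (.arrow B C)) (.exp e') (.anno (substEE x u e) C)
  | tabs {X e A B C} :
      PApp (.anno (.tabs X e) (.all X A B)) (.ty C)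
        (.anno (substTE X C e) (substTT X C B))
  | proj {l e A} : PApp (.anno (.rcd l e) (.rcd l A)) (.lbl l) (.anno e A)
  | merge {v1 v2 arg u1 u2} : PApp v1 arg u1 → PApp v2 arg u2 →
      PApp (.merge v1 v2) arg (.merge u1 u2)

/-- Small-step call-by-name reduction e ↪ e'. -/
inductive Step : Exp → Exp → Prop
  | papp {v e u} : Value v → PApp v (.exp e) u → Step (.app v e) u
  | ptapp {v A u} : Value v → PApp v (.ty A) u → Step (.tapp v A) u
  | pproj {v l u} : Value v → PApp v (.lbl l) u → Step (.proj v l) u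
  | fix {x A e} : Step (.efix x A e) (.anno (substEE x (.efix x A e) e) A)
  | annov {v A v'} : Value v → PVal v → Cast v A v' → Step (.anno v A) v'
  | appl {e1 e1' e2} : Step e1 e1' → Step (.app e1 e2) (.app e1' e2)
  | tappl {e e' A} : Step e e' → Step (.tapp e A) (.tapp e' A)
  | projl {e e' l} : Step e e' → Step (.proj e l) (.proj e' l)
  | anno {e e' A} : Step e e' → Step (.anno e A) (.anno e' A)
  | merge {e1 e1' e2 e2'} : Step e1 e1' → Step e2 e2' →
      Step (.merge e1 e2) (.merge e1' e2')
  | mergel {e1 e1' v2} : Step e1 e1' → Value v2 → Step (.merge e1 v2) (.merge e1' v2)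
  | merger {v1 e2 e2'} : Value v1 → Step e2 e2' → Step (.merge v1 e2) (.merge v1 e2')

/-- Isomorphic subtyping A ≲ B. -/
inductive IsoSub : Ty → Ty → Prop
  | refl {A} : IsoSub A A
  | and {A1 A2 B B1 B2} : Spl B B1 B2 → IsoSub A1 B1 → IsoSub A2 B2 →
      IsoSub (.and A1 A2) B

lemma spl_not_ord {A A1 A2 : Ty} (h : Spl A A1 A2) : ¬ Ordinary A := by
  induction h with
  | and => intro h; cases h
  | arrow _ ih => intro h; cases h; exact ih ‹_›
  | rcd _ ih => intro h; cases h; exact ih ‹_›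
  | all _ ih => intro h; cases h; exact ih ‹_›

lemma spl_det {A A1 A2 B1 B2 : Ty} (h1 : Spl A A1 A2) (h2 : Spl A B1 B2) :
    A1 = B1 ∧ A2 = B2 := by
  induction h1 generalizing B1 B2 with
  | and => cases h2; exact ⟨rfl, rfl⟩
  | arrow _ ih => cases h2 with
    | arrow h => obtain ⟨rfl, rfl⟩ := ih h; exact ⟨rfl, rfl⟩
  | rcd _ ih => cases h2 with
    | rcd h => obtain ⟨rfl, rfl⟩ := ih h; exact ⟨rfl, rfl⟩
  | all _ ih => cases h2 with
    | all h => obtain ⟨rfl, rfl⟩ := ih h; exact ⟨rfl, rfl⟩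

lemma tl_spl {Δ : TCtx} {A A1 A2 : Ty} (h : Spl A A1 A2) (ht : TL Δ A) :
    TL Δ A1 ∧ TL Δ A2 := by
  induction h generalizing Δ with
  | and => cases ht; exact ⟨‹_›, ‹_›⟩
  | arrow _ ih => cases ht with
    | arrow h => obtain ⟨h1, h2⟩ := ih h; exact ⟨.arrow h1, .arrow h2⟩
  | rcd _ ih => cases ht with
    | rcd h => obtain ⟨h1, h2⟩ := ih h; exact ⟨.rcd h1, .rcd h2⟩
  | all _ ih => cases ht with
    | all h => obtain ⟨h1, h2⟩ := ih h; exact ⟨.all h1, .all h2⟩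

lemma cast_tl_ord {A : Ty} {v v' : Exp} (h : Cast v A v')
    (hord : Ordinary A) (htl : TL [] A) : v' = TLVal A := by
  induction h with
  | int => cases htl
  | top => rfl
  | anno _ _ hn => exact absurd htl hn
  | mergel _ _ ih => exact ih hord htl
  | merger _ _ ih => exact ih hord htl
  | and hs => exact absurd hord (spl_not_ord hs)

/-- Top-like casting is term irrelevant. -/
theorem toplike_casting_term_irrelevant (A : Ty) (v1 v2 v1' v2' : Exp)
    (hA : TL [] A) (h1 : Cast v1 A v1') (h2 : Cast v2 A v2') : v1' = v2' := by
  induction h1 generalizing v2 v2' with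
  | int => cases hA
  | top hord htl => exact (cast_tl_ord h2 hord htl).symm
  | anno _ _ hn => exact absurd hA hn
  | mergel hord hc ih => exact ih _ _ hA h2
  | merger hord hc ih => exact ih _ _ hA h2
  | and hs hc1 hc2 ih1 ih2 =>
    obtain ⟨htl1, htl2⟩ := tl_spl hs hA
    cases h2 with
    | int => cases hs
    | top hord => exact absurd hord (spl_not_ord hs)
    | anno _ hord => exact absurd hord (spl_not_ord hs)
    | mergel hord => exact absurd hord (spl_not_ord hs)
    | merger hord => exact absurd hord (spl_not_ord hs)
    | and hs' hc1' hc2' =>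
      obtain ⟨rfl, rfl⟩ := spl_det hs hs'
      rw [ih1 _ _ htl1 hc1', ih2 _ _ htl2 hc2']
end

section
/- Upcast only: if v is a closed value synthesizing type B, and v casts under A to some v', then B <: A holds under the empty context. -/
lemma bl_sub {Δ A} (h : BL A) : DSub Δ A .tbot := by
  induction h with
  | bot => exact .refl
  | andl _ ih => exact .trans .andl ih
  | andr _ ih => exact .trans .andr ih

lemma tl_sub {Δ A} (h : TL Δ A) : ∀ B, DSub Δ B A := by
  induction h with
  | top => exact fun B => .top
  | and _ _ ih1 ih2 => exact fun B => .and (ih1 B) (ih2 B)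
  | arrow _ ih => exact fun B => .trans .top (.trans .topArrow (.arrow .top (ih _)))
  | rcd _ ih => exact fun B => .trans .top (.trans .topRcd (.rcd (ih _)))
  | all _ ih => exact fun B => .trans .top (.trans .topAll (.all .refl (ih _)))
  | tvar hmem hbl => exact fun B => .trans .top (.topVar hmem (bl_sub hbl))

lemma spl_sub {Δ A A1 A2} (h : Spl A A1 A2) : DSub Δ (.and A1 A2) A := by
  induction h generalizing Δ with
  | and => exact .refl
  | arrow _ ih => exact .trans .distArrow (.arrow .refl ih)
  | rcd _ ih => exact .trans .distRcd (.rcd ih)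
  | all _ ih => exact .trans .distAll (.all .refl ih)

/-- Upcast only. -/
theorem upcast_only (v v' : Exp) (A B : Ty)
    (hv : Value v) (ht : Typing [] [] v .inf B) (hc : Cast v A v') :
    DSub [] B A := by
  induction hc generalizing B with
  | int =>
    cases ht; exact .refl
  | top _ htl => exact tl_sub htl B
  | anno _ _ _ hsub =>
    cases ht; assumption
  | mergel _ _ ih =>
    cases hv with
    | chk h => cases h
    | merge h1 h2 =>
      cases ht with
      | merge t1 t2 _ => exact .trans .andl (ih _ h1 t1)
      | mergev _ _ _ t1 t2 => exact .trans .andl (ih _ h1 t1)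
  | merger _ _ ih =>
    cases hv with
    | chk h => cases h
    | merge h1 h2 =>
      cases ht with
      | merge t1 t2 _ => exact .trans .andr (ih _ h2 t2)
      | mergev _ _ _ t1 t2 => exact .trans .andr (ih _ h2 t2)
  | and hspl _ _ ih1 ih2 =>
    exact .trans (.and (ih1 _ hv ht) (ih2 _ hv ht)) (spl_sub hspl)
end
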